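/- arXiv:1605.03830 — 3 statements merged into one kernel-verified Lean document; each statement's English description precedes it below -/
import Mathlib

section
/- Let M ≥ 0. For n ≥ 0 define P_n(x, M) = L_n(x) + ∑_{j=0}^{n-1} (-1)^{n+1+j}·(n!·M/(j!·(nM+1)))·L_j(x). Then for every n ≥ 0, ∫_0^∞ P_n(x, M)²·e^{-x} dx + M·P_n(0, M)² = (n!)²·((n+1)M+1)/(nM+1), and for every n ≥ 1 the polynomial identity L_n(X) = P_{n+1}'(X, M)/(n+1) - (σ_n/n)·P_n'(X, M) holds with σ_n = - n(1+nM)/((n+1)M+1). -/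
/-! The monic Laguerre polynomials `L_k` satisfy `∫₀^∞ L_k(x) xᵐ e^{-x} dx = 0` for `m < k` and
`= (k!)²` for `m = k`: after integrating term by term this is the `k`-th forward difference of the
degree-`m` polynomial `b ↦ (b+1)(b+2)⋯(b+m)`. Hence the `L_k` are orthogonal with `‖L_k‖² = (k!)²`,
and since `P_n` is an explicit combination of `L_0, …, L_n`, its norm follows from Parseval and
`L_j(0) = (-1)ʲ j!`. The coefficient of `Xᵏ` in `P_n` is
`(-1)ⁿ⁺ᵏ (n!/k!) (C(n,k) - M/(nM+1) · C(n,k+1))` by the hockey-stick identity, and the coherence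
relation is then checked coefficientwise with Pascal's rule. -/

open Polynomial MeasureTheory

/-- The monic Laguerre–Sonin polynomial `L_n^α`; `L_n = L_n^0`. -/
noncomputable def laguerreS (α : ℝ) (n : ℕ) : Polynomial ℝ :=
  ∑ m ∈ Finset.range (n + 1),
    Polynomial.C ((-1 : ℝ) ^ n * n.factorial * ((-1 : ℝ) ^ m / m.factorial) *
      (Real.Gamma ((n : ℝ) + α + 1) /
        (Real.Gamma ((m : ℝ) + α + 1) * (n - m).factorial))) *
      Polynomial.X ^ m

/-- The polynomial `P_n(x, M) = L_n(x) + ∑_{j<n} (-1)^{n+1+j}·(n!·M/(j!·(nM+1)))·L_j(x)`. -/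
noncomputable def Pm (M : ℝ) (n : ℕ) : Polynomial ℝ :=
  laguerreS 0 n + ∑ j ∈ Finset.range n,
    Polynomial.C ((-1 : ℝ) ^ (n + 1 + j) *
      ((n.factorial : ℝ) * M / ((j.factorial : ℝ) * ((n : ℝ) * M + 1)))) * laguerreS 0 j

open Finset

lemma sq_neg_one_pow {R : Type*} [Monoid R] [HasDistribNeg R] (n : ℕ) :
    ((-1 : R) ^ n) ^ 2 = 1 := by
  rw [← pow_mul, mul_comm, pow_mul, neg_one_sq, one_pow]

lemma neg_one_pow_add_mul_neg_one_pow {R : Type*} [Monoid R] [HasDistribNeg R] (a j : ℕ) :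
    (-1 : R) ^ (a + j) * (-1) ^ j = (-1) ^ a := by
  rw [pow_add, mul_assoc, ← sq, sq_neg_one_pow, mul_one]

lemma integrableOn_pow_mul_exp_neg (m : ℕ) :
    IntegrableOn (fun x : ℝ => x ^ m * Real.exp (-x)) (Set.Ioi 0) := by
  have h := Real.GammaIntegral_convergent (s := (m : ℝ) + 1) (by positivity)
  simp only [add_sub_cancel_right, Real.rpow_natCast] at h
  simpa only [mul_comm] using h

lemma integral_pow_mul_exp_neg (m : ℕ) :
    ∫ x in Set.Ioi (0 : ℝ), x ^ m * Real.exp (-x) = m.factorial := by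
  have h := Real.Gamma_eq_integral (s := (m : ℝ) + 1) (by positivity)
  simp only [add_sub_cancel_right, Real.rpow_natCast, Real.Gamma_nat_eq_factorial] at h
  simpa only [mul_comm] using h.symm

lemma integrableOn_eval_mul_exp_neg (p : ℝ[X]) :
    IntegrableOn (fun x : ℝ => p.eval x * Real.exp (-x)) (Set.Ioi 0) := by
  simp_rw [eval_eq_sum_range, sum_mul, mul_assoc]
  exact integrable_finsetSum _ fun i _ => (integrableOn_pow_mul_exp_neg i).const_mul _

lemma integral_sum_mul_pow_mul_exp_neg {ι : Type*} (s : Finset ι) (c : ι → ℝ) (e : ι → ℕ) :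
    ∫ x in Set.Ioi (0 : ℝ), (∑ i ∈ s, c i * x ^ e i) * Real.exp (-x) =
      ∑ i ∈ s, c i * (e i).factorial := by
  simp_rw [sum_mul, mul_assoc]
  rw [integral_finsetSum _ fun i _ => (integrableOn_pow_mul_exp_neg (e i)).const_mul (c i)]
  simp_rw [integral_const_mul, integral_pow_mul_exp_neg]

noncomputable def laguerreCoeff (n m : ℕ) : ℝ :=
  (-1) ^ (n + m) * ((n.factorial : ℝ) / m.factorial) * n.choose m

lemma laguerreS_zero_eq_sum (n : ℕ) :
    laguerreS 0 n = ∑ m ∈ range (n + 1), C (laguerreCoeff n m) * X ^ m := by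
  refine sum_congr rfl fun m hm => ?_
  have hmn : m ≤ n := Nat.lt_succ_iff.1 (mem_range.1 hm)
  congr 2
  rw [laguerreCoeff, add_zero, add_zero, Real.Gamma_nat_eq_factorial,
    Real.Gamma_nat_eq_factorial, Nat.cast_choose ℝ hmn, pow_add]
  field_simp

lemma coeff_laguerreS_zero (n k : ℕ) : (laguerreS 0 n).coeff k = laguerreCoeff n k := by
  rw [laguerreS_zero_eq_sum, finsetSum_coeff]
  simp only [coeff_C_mul_X_pow]
  rw [sum_ite_eq]
  split_ifs with hk
  · rfl
  · rw [laguerreCoeff, Nat.choose_eq_zero_of_lt (by simpa using hk), Nat.cast_zero, mul_zero]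

lemma laguerreCoeff_self (n : ℕ) : laguerreCoeff n n = 1 := by
  have : (n.factorial : ℝ) ≠ 0 := by positivity
  simp [laguerreCoeff, ← two_mul, pow_mul, this]

lemma eval_laguerreS_zero (n : ℕ) (x : ℝ) :
    (laguerreS 0 n).eval x = ∑ m ∈ range (n + 1), laguerreCoeff n m * x ^ m := by
  simp [laguerreS_zero_eq_sum, eval_finsetSum]

lemma eval_zero_laguerreS_zero (n : ℕ) : (laguerreS 0 n).eval 0 = (-1) ^ n * n.factorial := by
  rw [← coeff_zero_eq_eval_zero, coeff_laguerreS_zero, laguerreCoeff]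
  simp

lemma sum_laguerreCoeff_mul_factorial_add_of_le (k m : ℕ) (hm : m ≤ k) :
    ∑ b ∈ range (k + 1), laguerreCoeff k b * ((b + m).factorial : ℝ) =
      if m = k then (k.factorial : ℝ) ^ 2 else 0 := by
  have hterm : ∀ b ∈ range (k + 1), laguerreCoeff k b * ((b + m).factorial : ℝ) =
      k.factorial * (((-1 : ℤ) ^ (k - b) * k.choose b) •
        (ascPochhammer ℝ m).eval (1 + b • 1)) := by
    intro b hb
    have hsign : (-1 : ℝ) ^ (k + b) = (-1) ^ (k - b) := by
      rw [show k + b = (k - b) + 2 * b by grind, pow_add, pow_mul]; norm_num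
    have hfac : ((b + m).factorial : ℝ) = b.factorial * (b + 1).ascFactorial m := by
      exact_mod_cast (Nat.factorial_mul_ascFactorial b m).symm
    rw [laguerreCoeff, hsign, hfac, Nat.cast_ascFactorial ℝ, zsmul_eq_mul, nsmul_one,
      Nat.cast_add_one, add_comm (b : ℝ)]
    push_cast
    field_simp
  rw [sum_congr rfl hterm, ← mul_sum, ← fwdDiff_iter_eq_sum_shift 1 (ascPochhammer ℝ m).eval]
  rcases hm.lt_or_eq with hlt | rfl
  · rw [Polynomial.fwdDiff_iter_eq_zero_of_degree_lt (by rwa [ascPochhammer_natDegree]),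
      if_neg hlt.ne, Pi.zero_apply, mul_zero]
  · have h := (ascPochhammer ℝ m).fwdDiff_iter_degree_eq_factorial
    rw [ascPochhammer_natDegree, (monic_ascPochhammer ℝ m).leadingCoeff, one_smul] at h
    rw [h, Pi.natCast_apply, if_pos rfl, sq]

lemma integral_laguerreS_mul_laguerreS (j k : ℕ) :
    ∫ x in Set.Ioi (0 : ℝ), (laguerreS 0 j).eval x * (laguerreS 0 k).eval x * Real.exp (-x) =
      if j = k then (j.factorial : ℝ) ^ 2 else 0 := by
  wlog hjk : j ≤ k generalizing j k
  · simp_rw [mul_comm ((laguerreS 0 j).eval _), this k j (le_of_not_ge hjk), eq_comm (a := k)]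
    split_ifs with h <;> simp [h]
  have hprod : ∀ x : ℝ, (laguerreS 0 j).eval x * (laguerreS 0 k).eval x =
      ∑ p ∈ range (j + 1) ×ˢ range (k + 1),
        laguerreCoeff j p.1 * laguerreCoeff k p.2 * x ^ (p.2 + p.1) := by
    intro x
    rw [eval_laguerreS_zero, eval_laguerreS_zero, sum_mul_sum, sum_product]
    exact sum_congr rfl fun a _ => sum_congr rfl fun b _ => by ring
  have hinner : ∀ a ∈ range (j + 1), ∑ b ∈ range (k + 1),
      laguerreCoeff j a * laguerreCoeff k b * ((b + a).factorial : ℝ) =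
        laguerreCoeff j a * if a = k then (k.factorial : ℝ) ^ 2 else 0 := by
    intro a ha
    simp_rw [mul_assoc, ← mul_sum]
    rw [sum_laguerreCoeff_mul_factorial_add_of_le k a (by grind)]
  simp_rw [hprod]
  rw [integral_sum_mul_pow_mul_exp_neg, sum_product, sum_congr rfl hinner]
  simp_rw [mul_ite, mul_zero]
  rw [sum_ite_eq']
  by_cases h : j = k
  · subst h
    simp [laguerreCoeff_self]
  · rw [if_neg (by grind), if_neg h]

lemma integral_sum_laguerreS_sq (N : ℕ) (d : ℕ → ℝ) :
    ∫ x in Set.Ioi (0 : ℝ), (∑ j ∈ range N, d j * (laguerreS 0 j).eval x) ^ 2 * Real.exp (-x) =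
      ∑ j ∈ range N, d j ^ 2 * (j.factorial : ℝ) ^ 2 := by
  have hexpand : ∀ x : ℝ, (∑ j ∈ range N, d j * (laguerreS 0 j).eval x) ^ 2 * Real.exp (-x) =
      ∑ i ∈ range N, ∑ j ∈ range N, d i * d j *
        ((laguerreS 0 i).eval x * (laguerreS 0 j).eval x * Real.exp (-x)) := by
    intro x
    rw [sq, sum_mul_sum, sum_mul]
    exact sum_congr rfl fun i _ => by rw [sum_mul]; exact sum_congr rfl fun j _ => by ring
  have hint : ∀ i j, IntegrableOn
      (fun x => (laguerreS 0 i).eval x * (laguerreS 0 j).eval x * Real.exp (-x)) (Set.Ioi 0) :=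
    fun i j => by simpa only [eval_mul] using integrableOn_eval_mul_exp_neg (laguerreS 0 i * laguerreS 0 j)
  simp_rw [hexpand]
  rw [integral_finsetSum _ fun i _ => integrable_finsetSum _ fun j _ => (hint i j).const_mul _]
  refine sum_congr rfl fun i hi => ?_
  rw [integral_finsetSum _ fun j _ => (hint i j).const_mul _]
  simp_rw [integral_const_mul, integral_laguerreS_mul_laguerreS, mul_ite, mul_zero]
  rw [sum_ite_eq, if_pos hi]
  ring

lemma integral_laguerreS_add_sum_sq (n : ℕ) (c : ℕ → ℝ) :
    ∫ x in Set.Ioi (0 : ℝ),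
        ((laguerreS 0 n).eval x + ∑ j ∈ range n, c j * (laguerreS 0 j).eval x) ^ 2 *
          Real.exp (-x) =
      (n.factorial : ℝ) ^ 2 + ∑ j ∈ range n, c j ^ 2 * (j.factorial : ℝ) ^ 2 := by
  set d := Function.update c n 1
  have htop : d n = 1 := Function.update_self _ _ _
  have hlow : ∀ j ∈ range n, d j = c j := fun j hj => Function.update_of_ne (by grind) _ _
  have hsum : ∀ x : ℝ, (laguerreS 0 n).eval x + ∑ j ∈ range n, c j * (laguerreS 0 j).eval x =
      ∑ j ∈ range (n + 1), d j * (laguerreS 0 j).eval x := fun x => by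
    rw [sum_range_succ, htop, one_mul, add_comm]
    exact congrArg₂ _ (sum_congr rfl fun j hj => by rw [hlow j hj]) rfl
  have hsq : (n.factorial : ℝ) ^ 2 + ∑ j ∈ range n, c j ^ 2 * (j.factorial : ℝ) ^ 2 =
      ∑ j ∈ range (n + 1), d j ^ 2 * (j.factorial : ℝ) ^ 2 := by
    rw [sum_range_succ, htop, one_pow, one_mul, add_comm]
    exact congrArg₂ _ (sum_congr rfl fun j hj => by rw [hlow j hj]) rfl
  simp_rw [hsum]
  rw [hsq]
  exact integral_sum_laguerreS_sq (n + 1) d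

lemma eval_Pm (M : ℝ) (n : ℕ) (x : ℝ) :
    (Pm M n).eval x = (laguerreS 0 n).eval x + ∑ j ∈ range n,
      (-1) ^ (n + 1 + j) * ((n.factorial : ℝ) * M / (j.factorial * (n * M + 1))) *
        (laguerreS 0 j).eval x := by
  simp [Pm, eval_finsetSum]

lemma eval_zero_Pm (M : ℝ) (n : ℕ) (hE : (n : ℝ) * M + 1 ≠ 0) :
    (Pm M n).eval 0 = (-1) ^ n * n.factorial / (n * M + 1) := by
  have hterm : ∀ j ∈ range n,
      (-1) ^ (n + 1 + j) * ((n.factorial : ℝ) * M / (j.factorial * (n * M + 1))) *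
        (laguerreS 0 j).eval 0 = (-1) ^ (n + 1) * (n.factorial * M / (n * M + 1)) := by
    intro j _
    have : (j.factorial : ℝ) ≠ 0 := by positivity
    calc _ = ((-1) ^ (n + 1 + j) * (-1) ^ j) *
          ((n.factorial : ℝ) * M / (j.factorial * (n * M + 1)) * j.factorial) := by
          rw [eval_zero_laguerreS_zero]; ring
      _ = _ := by rw [neg_one_pow_add_mul_neg_one_pow]; field_simp
  rw [eval_Pm, sum_congr rfl hterm, sum_const, card_range, nsmul_eq_mul,
    eval_zero_laguerreS_zero, pow_succ]
  field_simp
  ring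

theorem integral_eval_Pm_sq_add (M : ℝ) (hM : 0 ≤ M) (n : ℕ) :
    (∫ x in Set.Ioi (0 : ℝ), ((Pm M n).eval x) ^ 2 * Real.exp (-x)) +
        M * ((Pm M n).eval 0) ^ 2 =
      (n.factorial : ℝ) ^ 2 * (((n : ℝ) + 1) * M + 1) / ((n : ℝ) * M + 1) := by
  have hE : (n : ℝ) * M + 1 ≠ 0 := by positivity
  have hterm : ∀ j ∈ range n,
      ((-1) ^ (n + 1 + j) * ((n.factorial : ℝ) * M / (j.factorial * (n * M + 1)))) ^ 2 *
        (j.factorial : ℝ) ^ 2 = (n.factorial * M / (n * M + 1)) ^ 2 := by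
    intro j _
    have : (j.factorial : ℝ) ≠ 0 := by positivity
    rw [mul_pow, sq_neg_one_pow, one_mul]
    field_simp
  simp_rw [eval_Pm]
  rw [integral_laguerreS_add_sum_sq, sum_congr rfl hterm, sum_const, card_range, nsmul_eq_mul,
    ← eval_Pm, eval_zero_Pm M n hE, div_pow ((-1 : ℝ) ^ n * _), mul_pow ((-1 : ℝ) ^ n),
    sq_neg_one_pow, one_mul]
  field_simp
  ring

lemma sum_range_choose_eq_choose_succ (n k : ℕ) :
    ∑ j ∈ range n, j.choose k = n.choose (k + 1) := by
  induction n with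
  | zero => simp
  | succ n ih => rw [sum_range_succ, ih, Nat.choose_succ_succ', add_comm]

lemma coeff_Pm (M : ℝ) (n k : ℕ) :
    (Pm M n).coeff k = (-1) ^ (n + k) * ((n.factorial : ℝ) / k.factorial) *
      (n.choose k - M / (n * M + 1) * n.choose (k + 1)) := by
  have hterm : ∀ j ∈ range n,
      (C ((-1) ^ (n + 1 + j) * ((n.factorial : ℝ) * M / (j.factorial * (n * M + 1)))) *
        laguerreS 0 j).coeff k =
      (-1) ^ (n + 1) * (-1) ^ k * ((n.factorial : ℝ) / k.factorial) * (M / (n * M + 1)) *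
        j.choose k := by
    intro j _
    have : (j.factorial : ℝ) ≠ 0 := by positivity
    calc _ = ((-1) ^ (n + 1 + j) * (-1) ^ j) * (-1) ^ k *
          ((n.factorial : ℝ) * M / (j.factorial * (n * M + 1)) * (j.factorial / k.factorial)) *
            j.choose k := by
          rw [coeff_C_mul, coeff_laguerreS_zero, laguerreCoeff, pow_add _ j k]; ring
      _ = _ := by rw [neg_one_pow_add_mul_neg_one_pow]; field_simp
  rw [Pm, coeff_add, finsetSum_coeff, sum_congr rfl hterm, ← mul_sum, ← Nat.cast_sum,
    sum_range_choose_eq_choose_succ, coeff_laguerreS_zero, laguerreCoeff, pow_add, pow_succ]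
  ring

theorem laguerreS_eq_derivative_Pm (M : ℝ) (hM : 0 ≤ M) (n : ℕ) (hn : 1 ≤ n) :
    laguerreS 0 n =
      C (1 / ((n : ℝ) + 1)) * derivative (Pm M (n + 1)) -
        C ((-((n : ℝ) * (1 + (n : ℝ) * M) / (((n : ℝ) + 1) * M + 1))) / (n : ℝ)) *
          derivative (Pm M n) := by
  have hn0 : (n : ℝ) ≠ 0 := Nat.cast_ne_zero.2 (by omega)
  have hE : (n : ℝ) * M + 1 ≠ 0 := by positivity
  have hE' : ((n : ℝ) + 1) * M + 1 ≠ 0 := by positivity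
  ext k
  rw [coeff_laguerreS_zero, laguerreCoeff, coeff_sub, coeff_C_mul, coeff_C_mul,
    coeff_derivative, coeff_derivative, coeff_Pm, coeff_Pm, Nat.choose_succ_succ' n k,
    Nat.choose_succ_succ' n (k + 1), Nat.factorial_succ, Nat.factorial_succ,
    pow_add, pow_add, pow_add, pow_add]
  push_cast
  field_simp
  ring

theorem stmt5 (M : ℝ) (hM : 0 ≤ M) :
    (∀ n : ℕ,
      (∫ x in Set.Ioi (0 : ℝ), ((Pm M n).eval x) ^ 2 * Real.exp (-x)) +
          M * ((Pm M n).eval 0) ^ 2 =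
        (n.factorial : ℝ) ^ 2 * (((n : ℝ) + 1) * M + 1) / ((n : ℝ) * M + 1)) ∧
    ∀ n : ℕ, 1 ≤ n →
      laguerreS 0 n =
        Polynomial.C (1 / ((n : ℝ) + 1)) * Polynomial.derivative (Pm M (n + 1)) -
          Polynomial.C ((-((n : ℝ) * (1 + (n : ℝ) * M) / (((n : ℝ) + 1) * M + 1))) / (n : ℝ)) *
            Polynomial.derivative (Pm M n) := by
  exact ⟨integral_eval_Pm_sq_add M hM, laguerreS_eq_derivative_Pm M hM⟩
end

section
/- Let M ≥ 0 and n ≥ 1. For every nonzero real polynomial p of degree at most n, ∫_0^∞ p'(x)²·e^{-x} dx < (n(n+1)(3+(n+2)M)/(1+(n+1)M))·(∫_0^∞ p(x)²·e^{-x} dx + M·p(0)²). -/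
/-!
Expand `p = ∑ₖ aₖ Lₖ` in the Laguerre polynomials, which are orthonormal for `e⁻ˣ dx` on
`[0, ∞)`. Since `Lₖ' = -∑_{j<k} Lⱼ`, the coefficients of `p'` are the tails `-∑_{m>k} aₘ`, so
Cauchy–Schwarz and Parseval give `‖p'‖² ≤ n(n+1) ‖p‖²`. The constant of the theorem is strictly
larger than `n(n+1)`, `‖p‖² > 0` for `p ≠ 0`, and the point mass only adds `M p(0)² ≥ 0`.

The Laguerre polynomials are never written down: everything is computed on the monomial basis
from the moments `∫₀^∞ xⁱ Lₖ(x) e⁻ˣ dx = (-1)ᵏ i! C(i, k)`, which turn orthonormality into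
Vandermonde's identity and the derivative relation into partial alternating sums of binomial
coefficients.
-/

open Polynomial MeasureTheory Finset
open scoped Nat

lemma integrableOn_pow_mul_exp_neg_Ioi (k : ℕ) :
    IntegrableOn (fun x : ℝ => x ^ k * Real.exp (-x)) (Set.Ioi 0) := by
  refine (Real.GammaIntegral_convergent (s := k + 1) (by positivity)).congr_fun
    (fun x _ => ?_) measurableSet_Ioi
  simp [mul_comm]

lemma integral_pow_mul_exp_neg_Ioi (k : ℕ) :
    ∫ x in Set.Ioi (0 : ℝ), x ^ k * Real.exp (-x) = k ! := by
  rw [← Real.Gamma_nat_eq_factorial, Real.Gamma_eq_integral (by positivity)]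
  refine setIntegral_congr_fun measurableSet_Ioi (fun x _ => ?_)
  simp [mul_comm]

lemma alternating_sum_Ioc_choose_succ {j N : ℕ} (hj : j < N) {k : ℕ} (hk : k ≤ N) :
    ∑ m ∈ Ioc k N, (-1 : ℝ) ^ m * (j + 1).choose m = -((-1) ^ k * j.choose k) := by
  have hsplit := sum_range_add_sum_Ico (fun m => (-1 : ℝ) ^ m * (j + 1).choose m)
    (by omega : k + 1 ≤ N + 1)
  have partial_sum (m : ℕ) : ∑ i ∈ range (m + 1), (-1 : ℝ) ^ i * (j + 1).choose i
      = (-1) ^ m * j.choose m := by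
    exact_mod_cast Int.alternating_sum_range_choose_eq_choose
  rw [Finset.Ico_add_one_add_one_eq_Ioc, partial_sum, partial_sum,
    Nat.choose_eq_zero_of_lt hj] at hsplit
  push_cast at hsplit
  linarith

lemma sum_range_choose_mul_choose {i j N : ℕ} (hj : j < N) :
    ∑ k ∈ range N, i.choose k * j.choose k = (i + j).choose j := by
  rw [Nat.add_choose_eq, Nat.sum_antidiagonal_eq_sum_range_succ_mk]
  refine (sum_subset (range_subset_range.mpr hj) fun k _ hk => ?_).symm.trans
    (sum_congr rfl fun k hk => ?_)
  · rw [Nat.choose_eq_zero_of_lt (n := j) (by simpa using hk), mul_zero]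
  · rw [Nat.choose_symm (by simpa [Nat.lt_succ_iff] using hk)]

/-- `∫₀^∞ xⁱ Lₖ(x) e⁻ˣ dx`, where `Lₖ` is the `k`-th Laguerre polynomial. -/
noncomputable def laguerreMoment (k i : ℕ) : ℝ := (-1) ^ k * i ! * i.choose k

/-- Orthonormality of the Laguerre polynomials, read on the monomial basis. -/
lemma sum_laguerreMoment_mul_laguerreMoment (i : ℕ) {j N : ℕ} (hj : j < N) :
    ∑ k ∈ range N, laguerreMoment k i * laguerreMoment k j = (i + j)! := by
  have hterm (k : ℕ) : laguerreMoment k i * laguerreMoment k j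
      = i ! * j ! * (i.choose k * j.choose k : ℕ) := by
    have : ((-1 : ℝ) ^ k) * (-1) ^ k = 1 := by rw [← mul_pow]; simp
    simp only [laguerreMoment]
    push_cast
    linear_combination (i ! * j ! * i.choose k * j.choose k : ℝ) * this
  simp_rw [hterm, ← mul_sum, ← Nat.cast_sum, sum_range_choose_mul_choose hj,
    ← Nat.add_choose_mul_factorial_mul_factorial i j]
  push_cast
  ring

namespace Polynomial

/-- The coefficient `∫₀^∞ p Lₖ e⁻ˣ dx` of `p` on the `k`-th Laguerre polynomial. -/
noncomputable def laguerreCoeff (k : ℕ) : ℝ[X] →ₗ[ℝ] ℝ :=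
  lsum fun i => laguerreMoment k i • LinearMap.id

lemma laguerreCoeff_eq_sum_range {p : ℝ[X]} {N : ℕ} (hp : p.natDegree < N) (k : ℕ) :
    laguerreCoeff k p = ∑ i ∈ range N, p.coeff i * laguerreMoment k i := by
  rw [laguerreCoeff, lsum_apply, sum_over_range' _ (by simp) N hp]
  simp [mul_comm]

lemma laguerreCoeff_C_mul_X_pow (k n : ℕ) (a : ℝ) :
    laguerreCoeff k (C a * X ^ n) = a * laguerreMoment k n := by
  rw [laguerreCoeff_eq_sum_range ((natDegree_C_mul_X_pow_le a n).trans_lt n.lt_succ_self)]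
  simp

lemma laguerreCoeff_natDegree_ne_zero {p : ℝ[X]} (hp : p ≠ 0) :
    laguerreCoeff p.natDegree p ≠ 0 := by
  have hlow (i : ℕ) (hi : i ∈ range p.natDegree) :
      p.coeff i * laguerreMoment p.natDegree i = 0 := by
    rw [laguerreMoment, Nat.choose_eq_zero_of_lt (mem_range.mp hi)]
    simp
  rw [laguerreCoeff_eq_sum_range p.natDegree.lt_succ_self, sum_range_succ, sum_eq_zero hlow]
  simp [laguerreMoment, hp, Nat.factorial_ne_zero]

lemma laguerreCoeff_derivative {p : ℝ[X]} {N : ℕ} (hp : p.natDegree ≤ N) {k : ℕ} (hk : k ≤ N) :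
    laguerreCoeff k (derivative p) = -∑ m ∈ Ioc k N, laguerreCoeff m p := by
  refine induction_with_natDegree_le
    (fun p => laguerreCoeff k (derivative p) = -∑ m ∈ Ioc k N, laguerreCoeff m p) N
    (by simp) (fun n a _ hn => ?_)
    (fun f g _ _ hf hg => by
      simp only [map_add, hf, hg, sum_add_distrib, neg_add]) p hp
  simp only [derivative_C_mul_X_pow, laguerreCoeff_C_mul_X_pow, laguerreMoment]
  cases n with
  | zero =>
    rw [Nat.cast_zero, mul_zero, zero_mul, eq_comm, neg_eq_zero]
    refine sum_eq_zero fun m hm => ?_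
    rw [Nat.choose_eq_zero_of_lt (Nat.zero_lt_of_lt (mem_Ioc.mp hm).1)]
    simp
  | succ j =>
    have htail := alternating_sum_Ioc_choose_succ (Nat.succ_le_iff.mp hn) hk
    calc a * ((j + 1 : ℕ) : ℝ) * ((-1) ^ k * j ! * j.choose k)
        = -(a * (j + 1)! * -((-1) ^ k * j.choose k)) := by
          push_cast [Nat.factorial_succ]; ring
      _ = -∑ m ∈ Ioc k N, a * ((-1) ^ m * (j + 1)! * (j + 1).choose m) := by
          rw [← htail, mul_sum]
          exact congrArg _ (sum_congr rfl fun m _ => by ring)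

lemma integral_eval_mul_eval_mul_exp_neg {p q : ℝ[X]} {N : ℕ} (hp : p.natDegree < N)
    (hq : q.natDegree < N) :
    ∫ x in Set.Ioi (0 : ℝ), p.eval x * q.eval x * Real.exp (-x)
      = ∑ i ∈ range N, ∑ j ∈ range N, p.coeff i * q.coeff j * (i + j)! := by
  have hexpand (x : ℝ) : p.eval x * q.eval x * Real.exp (-x)
      = ∑ i ∈ range N, ∑ j ∈ range N, p.coeff i * q.coeff j * (x ^ (i + j) * Real.exp (-x)) := by
    simp_rw [eval_eq_sum_range' hp, eval_eq_sum_range' hq, sum_mul_sum, sum_mul, pow_add]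
    exact sum_congr rfl fun i _ => sum_congr rfl fun j _ => by ring
  have hint (i j : ℕ) :=
    ((integrableOn_pow_mul_exp_neg_Ioi (i + j)).const_mul (p.coeff i * q.coeff j))
  simp_rw [hexpand]
  rw [integral_finsetSum _ fun i _ => integrable_finsetSum _ fun j _ => hint i j]
  refine sum_congr rfl fun i _ => ?_
  rw [integral_finsetSum _ fun j _ => hint i j]
  simp_rw [integral_const_mul, integral_pow_mul_exp_neg_Ioi]

lemma integral_eval_mul_eval_mul_exp_neg_eq_sum {p q : ℝ[X]} {N : ℕ} (hp : p.natDegree < N)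
    (hq : q.natDegree < N) :
    ∫ x in Set.Ioi (0 : ℝ), p.eval x * q.eval x * Real.exp (-x)
      = ∑ k ∈ range N, laguerreCoeff k p * laguerreCoeff k q := by
  simp_rw [integral_eval_mul_eval_mul_exp_neg hp hq, laguerreCoeff_eq_sum_range hp,
    laguerreCoeff_eq_sum_range hq, sum_mul_sum]
  symm
  rw [sum_comm]
  refine sum_congr rfl fun i _ => ?_
  rw [sum_comm]
  refine sum_congr rfl fun j hj => ?_
  rw [← sum_laguerreMoment_mul_laguerreMoment i (mem_range.mp hj), mul_sum]
  exact sum_congr rfl fun k _ => by ring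

lemma integral_eval_sq_mul_exp_neg_eq_sum {p : ℝ[X]} {N : ℕ} (hp : p.natDegree < N) :
    ∫ x in Set.Ioi (0 : ℝ), p.eval x ^ 2 * Real.exp (-x)
      = ∑ k ∈ range N, laguerreCoeff k p ^ 2 := by
  simpa only [sq] using integral_eval_mul_eval_mul_exp_neg_eq_sum hp hp

lemma integral_eval_sq_mul_exp_neg_pos {p : ℝ[X]} (hp : p ≠ 0) :
    0 < ∫ x in Set.Ioi (0 : ℝ), p.eval x ^ 2 * Real.exp (-x) := by
  rw [integral_eval_sq_mul_exp_neg_eq_sum p.natDegree.lt_succ_self]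
  exact sum_pos' (fun k _ => sq_nonneg _) ⟨p.natDegree, self_mem_range_succ _,
    sq_pos_of_ne_zero (laguerreCoeff_natDegree_ne_zero hp)⟩

lemma integral_derivative_eval_sq_mul_exp_neg_le {p : ℝ[X]} {n : ℕ} (hp : p.natDegree ≤ n) :
    ∫ x in Set.Ioi (0 : ℝ), (derivative p).eval x ^ 2 * Real.exp (-x)
      ≤ n * (n + 1) * ∫ x in Set.Ioi (0 : ℝ), p.eval x ^ 2 * Real.exp (-x) := by
  have hp' : (derivative p).natDegree < n + 1 :=
    (natDegree_derivative_le p).trans_lt (by omega)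
  rw [integral_eval_sq_mul_exp_neg_eq_sum hp',
    integral_eval_sq_mul_exp_neg_eq_sum (Nat.lt_succ_of_le hp)]
  set S := ∑ k ∈ range (n + 1), laguerreCoeff k p ^ 2
  have hcoeff (k : ℕ) (hk : k ∈ range (n + 1)) : laguerreCoeff k (derivative p) ^ 2 ≤ n * S := by
    rw [laguerreCoeff_derivative hp (Nat.lt_succ_iff.mp (mem_range.mp hk)), neg_sq]
    calc (∑ m ∈ Ioc k n, laguerreCoeff m p) ^ 2
        ≤ #(Ioc k n) * ∑ m ∈ Ioc k n, laguerreCoeff m p ^ 2 := sq_sum_le_card_mul_sum_sq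
      _ ≤ n * S := by
          gcongr
          · exact_mod_cast (Nat.card_Ioc k n).trans_le (Nat.sub_le n k)
          · exact sum_le_sum_of_subset_of_nonneg
              (fun m hm => mem_range.mpr (Nat.lt_succ_of_le (mem_Ioc.mp hm).2))
              (fun m _ _ => sq_nonneg _)
  calc ∑ k ∈ range (n + 1), laguerreCoeff k (derivative p) ^ 2
      ≤ ∑ _k ∈ range (n + 1), n * S := sum_le_sum hcoeff
    _ = n * (n + 1) * S := by
      rw [sum_const, card_range, nsmul_eq_mul]; push_cast; ring

end Polynomial

theorem stmt10 (M : ℝ) (hM : 0 ≤ M) (n : ℕ) (hn : 1 ≤ n)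
    (p : Polynomial ℝ) (hp : p ≠ 0) (hdeg : p.degree ≤ n) :
    (∫ x in Set.Ioi (0 : ℝ), ((Polynomial.derivative p).eval x) ^ 2 * Real.exp (-x)) <
      ((n : ℝ) * ((n : ℝ) + 1) * (3 + ((n : ℝ) + 2) * M) / (1 + ((n : ℝ) + 1) * M)) *
        ((∫ x in Set.Ioi (0 : ℝ), (p.eval x) ^ 2 * Real.exp (-x)) + M * (p.eval 0) ^ 2) := by
  have hn' : (1 : ℝ) ≤ n := by exact_mod_cast hn
  have hden : 0 < 1 + ((n : ℝ) + 1) * M := by positivity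
  have hconst : (n : ℝ) * (n + 1) < n * (n + 1) * (3 + (n + 2) * M) / (1 + (n + 1) * M) := by
    rw [lt_div_iff₀ hden]
    nlinarith
  calc ∫ x in Set.Ioi (0 : ℝ), (derivative p).eval x ^ 2 * Real.exp (-x)
      ≤ n * (n + 1) * ∫ x in Set.Ioi (0 : ℝ), p.eval x ^ 2 * Real.exp (-x) :=
        integral_derivative_eval_sq_mul_exp_neg_le (natDegree_le_iff_degree_le.mpr hdeg)
    _ < n * (n + 1) * (3 + (n + 2) * M) / (1 + (n + 1) * M) *
          ∫ x in Set.Ioi (0 : ℝ), p.eval x ^ 2 * Real.exp (-x) :=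
        mul_lt_mul_of_pos_right hconst (integral_eval_sq_mul_exp_neg_pos hp)
    _ ≤ _ := by gcongr; exact le_add_of_nonneg_right (by positivity)
end

section
/- Let α > -1, ξ ≤ 0, M ≥ 0, and define the linear functional c_1(q) = ∫_0^∞ q(x)·x^{α+1}·e^{-x}/(x-ξ) dx + M·q(ξ) on real polynomials. Let n ≥ 1 and σ ∈ ℝ, set T_n = L_n^{α+1} - σ·L_{n-1}^{α+1}, and assume that c_1(q·T_n) = 0 for every real polynomial q of degree at most n-1 and that c_1(L_{n-1}^{α+1}) ≠ 0. Then σ = c_1(L_n^{α+1})/c_1(L_{n-1}^{α+1}) and c_1(T_n²) = -(n-1)!·Γ(n+α+1)·c_1(L_n^{α+1})/c_1(L_{n-1}^{α+1}). -/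
/-!
Expanding `L_n^β` in monomials and integrating term by term against `x^β e^{-x}` turns
`∫₀^∞ x^j L_n^β(x) x^β e^{-x} dx` into `Γ(n+β+1)` times the `n`-th finite difference of the
degree-`j` polynomial `m ↦ (m+β+1)_j`; this gives the orthogonality of the `L_n^β`, with
squared norm `n! Γ(n+β+1)`.

The functional `c_1` satisfies `c_1((x-ξ) q) = ∫₀^∞ q(x) x^{α+1} e^{-x} dx`. Testing the
orthogonality of `T_n` against `1` gives `σ`. Writing `L_n = (x-ξ) L_{n-1} + r` with `deg r < n`,
`c_1(T_n²) = c_1(L_n T_n) = ∫ L_{n-1} T_n x^{α+1} e^{-x} = -σ (n-1)! Γ(n+α+1)`.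
-/

open Polynomial MeasureTheory

/-- The linear functional `c_1(q) = ∫_0^∞ q(x)·x^{α+1}·e^{-x}/(x-ξ) dx + M·q(ξ)`. -/
noncomputable def c1fun (α ξ M : ℝ) (q : Polynomial ℝ) : ℝ :=
  (∫ x in Set.Ioi (0 : ℝ), q.eval x * x ^ (α + 1) * Real.exp (-x) / (x - ξ)) + M * q.eval ξ

open Finset Set

theorem Polynomial.fwdDiff_iter_eval_of_natDegree_le {R : Type*} [CommRing R] {P : R[X]}
    {n : ℕ} (hP : P.natDegree ≤ n) (x : R) :
    (fwdDiff 1)^[n] P.eval x = n.factorial * P.coeff n := by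
  rcases hP.lt_or_eq with hlt | rfl
  · simp [P.fwdDiff_iter_eq_zero_of_degree_lt hlt, coeff_eq_zero_of_natDegree_lt hlt]
  · simp [P.fwdDiff_iter_degree_eq_factorial, mul_comm]

theorem Polynomial.sum_range_choose_mul_eval_of_natDegree_le {R : Type*} [CommRing R]
    {P : R[X]} {n : ℕ} (hP : P.natDegree ≤ n) :
    ∑ m ∈ range (n + 1), (-1 : R) ^ (n - m) * n.choose m * P.eval (m : R) =
      n.factorial * P.coeff n := by
  rw [← P.fwdDiff_iter_eval_of_natDegree_le hP 0, fwdDiff_iter_eq_sum_shift]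
  simp

theorem Real.Gamma_add_nat_eq_mul_ascPochhammer {s : ℝ} (hs : 0 < s) (j : ℕ) :
    Real.Gamma (s + j) = Real.Gamma s * (ascPochhammer ℝ j).eval s := by
  induction j with
  | zero => simp
  | succ j ih =>
    rw [Nat.cast_succ, ← add_assoc, Real.Gamma_add_one (by positivity), ih,
      ascPochhammer_succ_right]
    simp only [eval_mul, eval_add, eval_X, eval_natCast]
    ring

theorem isMonicOfDegree_ascPochhammer_comp_X_add_C (j : ℕ) (r : ℝ) :
    IsMonicOfDegree ((ascPochhammer ℝ j).comp (X + C r)) j := by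
  simpa using (IsMonicOfDegree.comp one_ne_zero
    ⟨ascPochhammer_natDegree ℝ j, monic_ascPochhammer ℝ j⟩ (isMonicOfDegree_X_add_one r))

/-- `q ↦ ∫₀^∞ q(x) x^β e^{-x} dx` (`integral_eval_mul_rpow_mul_exp_neg`), defined through its
moments `Γ(k+β+1)` so that it is linear with no integrability side conditions. -/
noncomputable def gammaMoment (β : ℝ) : ℝ[X] →ₗ[ℝ] ℝ :=
  Polynomial.lsum fun k => Real.Gamma (k + β + 1) • LinearMap.id

theorem gammaMoment_monomial (β a : ℝ) (k : ℕ) :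
    gammaMoment β (monomial k a) = a * Real.Gamma (k + β + 1) := by
  simp [gammaMoment, mul_comm]

theorem gammaMoment_C_mul_X_pow (β a : ℝ) (k : ℕ) :
    gammaMoment β (C a * X ^ k) = a * Real.Gamma (k + β + 1) := by
  rw [C_mul_X_pow_eq_monomial, gammaMoment_monomial]

theorem gammaMoment_C_mul (β a : ℝ) (p : ℝ[X]) :
    gammaMoment β (C a * p) = a * gammaMoment β p := by
  rw [← smul_eq_C_mul, map_smul, smul_eq_mul]

theorem natCast_add_add_one_pos {β : ℝ} (hβ : -1 < β) (m : ℕ) : 0 < (m : ℝ) + β + 1 := by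
  linarith [m.cast_nonneg (α := ℝ)]

theorem laguerreS_natDegree_le (β : ℝ) (n : ℕ) : (laguerreS β n).natDegree ≤ n := by
  refine natDegree_sum_le_of_forall_le _ _ fun m hm => ?_
  exact (natDegree_C_mul_X_pow_le _ _).trans (Nat.lt_succ_iff.mp (mem_range.mp hm))

theorem laguerreS_coeff_of_le (β : ℝ) {n m : ℕ} (hm : m ≤ n) :
    (laguerreS β n).coeff m = (-1 : ℝ) ^ n * n.factorial * ((-1 : ℝ) ^ m / m.factorial) *
      (Real.Gamma ((n : ℝ) + β + 1) / (Real.Gamma ((m : ℝ) + β + 1) * (n - m).factorial)) := by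
  rw [laguerreS, finsetSum_coeff]
  simp only [coeff_C_mul_X_pow]
  rw [sum_ite_eq, if_pos (mem_range.mpr (Nat.lt_succ_of_le hm))]

theorem laguerreS_coeff_mul_Gamma {β : ℝ} (hβ : -1 < β) {n m : ℕ} (hm : m ≤ n) :
    (laguerreS β n).coeff m * Real.Gamma (m + β + 1) =
      (-1) ^ (n - m) * n.choose m * Real.Gamma (n + β + 1) := by
  have hΓ : Real.Gamma (m + β + 1) ≠ 0 :=
    (Real.Gamma_pos_of_pos (natCast_add_add_one_pos hβ m)).ne'
  have hsign : (-1 : ℝ) ^ n * (-1) ^ m = (-1) ^ (n - m) := by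
    rw [← pow_add, ← Nat.sub_add_cancel hm, add_assoc, pow_add, ← two_mul, pow_mul]; simp
  rw [laguerreS_coeff_of_le β hm, Nat.choose_eq_factorial_div_factorial hm,
    Nat.cast_div (Nat.factorial_mul_factorial_dvd_factorial hm) (by positivity), ← hsign]
  field_simp
  push_cast
  ring

theorem isMonicOfDegree_laguerreS {β : ℝ} (hβ : -1 < β) (n : ℕ) :
    IsMonicOfDegree (laguerreS β n) n := by
  refine (isMonicOfDegree_iff _ _).mpr ⟨laguerreS_natDegree_le β n, ?_⟩
  have h := laguerreS_coeff_mul_Gamma hβ (le_refl n)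
  simp only [Nat.sub_self, pow_zero, Nat.choose_self, Nat.cast_one, one_mul] at h
  exact (mul_eq_right₀ (Real.Gamma_pos_of_pos (natCast_add_add_one_pos hβ _)).ne').mp h

theorem gammaMoment_X_pow_mul_laguerreS {β : ℝ} (hβ : -1 < β) {n j : ℕ} (hj : j ≤ n) :
    gammaMoment β (X ^ j * laguerreS β n) =
      if j = n then n.factorial * Real.Gamma (n + β + 1) else 0 := by
  set L := laguerreS β n
  set P := (ascPochhammer ℝ j).comp (X + C (β + 1))
  have hP : IsMonicOfDegree P j := isMonicOfDegree_ascPochhammer_comp_X_add_C j (β + 1)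
  have hterm : ∀ m ∈ range (n + 1), gammaMoment β (X ^ j * (C (L.coeff m) * X ^ m)) =
      Real.Gamma (n + β + 1) * ((-1) ^ (n - m) * n.choose m * P.eval (m : ℝ)) := by
    intro m hm
    have hΓ := Real.Gamma_add_nat_eq_mul_ascPochhammer (natCast_add_add_one_pos hβ m) j
    have hexp : (((m + j : ℕ) : ℝ) + β + 1) = (m + β + 1) + j := by push_cast; ring
    rw [mul_left_comm, ← pow_add, add_comm j, gammaMoment_C_mul_X_pow, hexp, hΓ, ← mul_assoc,
      laguerreS_coeff_mul_Gamma hβ (Nat.lt_succ_iff.mp (mem_range.mp hm)), eval_comp]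
    simp only [eval_add, eval_X, eval_C, add_assoc]
    ring
  rw [L.as_sum_range_C_mul_X_pow' (Nat.lt_succ_of_le (laguerreS_natDegree_le β n)), mul_sum,
    map_sum, sum_congr rfl hterm, ← mul_sum,
    Polynomial.sum_range_choose_mul_eval_of_natDegree_le (hP.natDegree_eq.trans_le hj)]
  rcases hj.lt_or_eq with hlt | rfl
  · rw [coeff_eq_zero_of_natDegree_lt (hP.natDegree_eq.trans_lt hlt), if_neg hlt.ne]
    ring
  · rw [((isMonicOfDegree_iff P j).mp hP).2, if_pos rfl]
    ring

theorem gammaMoment_mul_laguerreS {β : ℝ} (hβ : -1 < β) {n : ℕ} {q : ℝ[X]}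
    (hq : q.natDegree ≤ n) :
    gammaMoment β (q * laguerreS β n) = q.coeff n * n.factorial * Real.Gamma (n + β + 1) := by
  conv_lhs => rw [q.as_sum_range_C_mul_X_pow' (Nat.lt_succ_of_le hq), sum_mul, map_sum]
  simp only [mul_assoc, gammaMoment_C_mul]
  rw [sum_congr rfl fun j hj => by
    rw [gammaMoment_X_pow_mul_laguerreS hβ (Nat.lt_succ_iff.mp (mem_range.mp hj)), mul_ite,
      mul_zero], sum_ite_eq', if_pos (self_mem_range_succ n)]

theorem eqOn_monomial_mul_rpow_mul_exp_neg (k : ℕ) (a s : ℝ) :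
    EqOn (fun x => (monomial k a).eval x * x ^ s * Real.exp (-x))
      (fun x => a * (Real.exp (-x) * x ^ ((k + s + 1) - 1))) (Ioi 0) := by
  intro x (hx : 0 < x)
  simp only [eval_monomial, add_sub_cancel_right, Real.rpow_add hx, Real.rpow_natCast]
  ring

theorem integrableOn_eval_mul_rpow_mul_exp_neg (q : ℝ[X]) {s : ℝ} (hs : -1 < s) :
    IntegrableOn (fun x => q.eval x * x ^ s * Real.exp (-x)) (Ioi 0) := by
  induction q using Polynomial.induction_on' with
  | add p q hp hq =>
    simp only [eval_add, add_mul]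
    exact hp.add hq
  | monomial k a =>
    exact IntegrableOn.congr_fun
      ((Real.GammaIntegral_convergent (natCast_add_add_one_pos hs k)).const_mul a)
      (eqOn_monomial_mul_rpow_mul_exp_neg k a s).symm measurableSet_Ioi

theorem integral_eval_mul_rpow_mul_exp_neg {s : ℝ} (hs : -1 < s) (q : ℝ[X]) :
    ∫ x in Ioi 0, q.eval x * x ^ s * Real.exp (-x) = gammaMoment s q := by
  induction q using Polynomial.induction_on' with
  | add p q hp hq =>
    simp only [eval_add, add_mul, map_add]
    rw [integral_add (integrableOn_eval_mul_rpow_mul_exp_neg p hs)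
      (integrableOn_eval_mul_rpow_mul_exp_neg q hs), hp, hq]
  | monomial k a =>
    rw [setIntegral_congr_fun measurableSet_Ioi (eqOn_monomial_mul_rpow_mul_exp_neg k a s),
      integral_const_mul, ← Real.Gamma_eq_integral (natCast_add_add_one_pos hs k),
      gammaMoment_monomial]

section c1fun

variable {α ξ : ℝ}

theorem integrableOn_c1fun_integrand (hα : -1 < α) (hξ : ξ ≤ 0) (q : ℝ[X]) :
    IntegrableOn (fun x => q.eval x * x ^ (α + 1) * Real.exp (-x) / (x - ξ)) (Ioi 0) := by
  have hbound : ∀ᵐ x ∂volume.restrict (Ioi (0 : ℝ)), ‖x / (x - ξ)‖ ≤ 1 := by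
    refine (ae_restrict_iff' measurableSet_Ioi).mpr (ae_of_all _ fun x (hx : 0 < x) => ?_)
    rw [Real.norm_eq_abs, abs_of_pos (div_pos hx (by linarith)), div_le_one (by linarith)]
    linarith
  have hmeas : Measurable fun x : ℝ => x / (x - ξ) := measurable_id.div (measurable_id.sub_const ξ)
  refine IntegrableOn.congr_fun ((integrableOn_eval_mul_rpow_mul_exp_neg q hα).mul_bdd
    hmeas.aestronglyMeasurable hbound) (fun x (hx : 0 < x) => ?_) measurableSet_Ioi
  simp only [Real.rpow_add_one hx.ne']
  ring

theorem isLinearMap_c1fun (hα : -1 < α) (hξ : ξ ≤ 0) (M : ℝ) : IsLinearMap ℝ (c1fun α ξ M) where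
  map_add p q := by
    simp only [c1fun, eval_add, add_mul, add_div]
    rw [integral_add (integrableOn_c1fun_integrand hα hξ p) (integrableOn_c1fun_integrand hα hξ q)]
    ring
  map_smul a p := by
    simp only [c1fun, eval_smul, smul_eq_mul, mul_assoc, mul_div_assoc]
    rw [integral_const_mul]
    ring

theorem c1fun_X_sub_C_mul (hα : -1 < α) (hξ : ξ ≤ 0) (M : ℝ) (q : ℝ[X]) :
    c1fun α ξ M ((X - C ξ) * q) = gammaMoment (α + 1) q := by
  rw [← integral_eval_mul_rpow_mul_exp_neg (by linarith), c1fun, eval_mul, eval_sub, eval_X,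
    eval_C, sub_self, zero_mul, mul_zero, add_zero]
  refine setIntegral_congr_fun measurableSet_Ioi fun x (hx : 0 < x) => ?_
  have hxξ : x - ξ ≠ 0 := (by linarith : 0 < x - ξ).ne'
  simp only [eval_mul, eval_sub, eval_X, eval_C]
  field_simp

end c1fun

theorem map_sq_of_orthogonal_laguerreS_sub {β ξ σ : ℝ} (hβ : -1 < β) (c : ℝ[X] →ₗ[ℝ] ℝ)
    (hc : ∀ q, c ((X - C ξ) * q) = gammaMoment β q) {n : ℕ} {T : ℝ[X]}
    (hT : T = laguerreS β (n + 1) - C σ * laguerreS β n)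
    (horth : ∀ q : ℝ[X], q.degree < (n + 1 : ℕ) → c (q * T) = 0) :
    c (T ^ 2) = -(σ * n.factorial * Real.Gamma (n + β + 1)) := by
  set L₁ := laguerreS β (n + 1)
  set L₀ := laguerreS β n
  have hL₀ : IsMonicOfDegree L₀ n := isMonicOfDegree_laguerreS hβ n
  have horth' : ∀ q : ℝ[X], q.natDegree ≤ n → c (q * T) = 0 := fun q hq =>
    horth q (degree_le_natDegree.trans_lt (by exact_mod_cast Nat.lt_succ_of_le hq))
  have hL₁T : c (L₁ * T) = gammaMoment β (L₀ * T) := by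
    have hr : (L₁ - (X - C ξ) * L₀).natDegree ≤ n := Nat.lt_succ_iff.mp <|
      (isMonicOfDegree_laguerreS hβ (n + 1)).natDegree_sub_lt n.succ_ne_zero <| by
        simpa [add_comm] using (isMonicOfDegree_X_sub_one ξ).mul hL₀
    calc c (L₁ * T) = c ((X - C ξ) * (L₀ * T) + (L₁ - (X - C ξ) * L₀) * T) := by ring_nf
      _ = gammaMoment β (L₀ * T) := by rw [map_add, hc, horth' _ hr, add_zero]
  have hL₀L₁ : gammaMoment β (L₀ * L₁) = 0 := by
    rw [gammaMoment_mul_laguerreS hβ (hL₀.natDegree_eq.trans_le n.le_succ),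
      coeff_eq_zero_of_natDegree_lt (hL₀.natDegree_eq.trans_lt n.lt_succ_self)]
    ring
  have hL₀L₀ : gammaMoment β (L₀ * L₀) = n.factorial * Real.Gamma (n + β + 1) := by
    rw [gammaMoment_mul_laguerreS hβ hL₀.natDegree_eq.le, ((isMonicOfDegree_iff L₀ n).mp hL₀).2]
    ring
  have hT₀ : L₀ * T = L₀ * L₁ - σ • (L₀ * L₀) := by rw [hT, smul_eq_C_mul]; ring
  have hT₂ : T ^ 2 = L₁ * T - σ • (L₀ * T) := by rw [smul_eq_C_mul, sq]; nth_rw 1 [hT]; ring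
  calc c (T ^ 2) = c (L₁ * T) - σ * c (L₀ * T) := by rw [hT₂, map_sub, map_smul, smul_eq_mul]
    _ = gammaMoment β (L₀ * L₁) - σ * gammaMoment β (L₀ * L₀) := by
        rw [hL₁T, horth' L₀ hL₀.natDegree_eq.le, hT₀, map_sub, map_smul, smul_eq_mul]
        ring
    _ = -(σ * n.factorial * Real.Gamma (n + β + 1)) := by rw [hL₀L₁, hL₀L₀]; ring

theorem stmt12_general (α ξ M : ℝ) (hα : -1 < α) (hξ : ξ ≤ 0)
    (n : ℕ) (hn : 1 ≤ n) (σ : ℝ) (T : Polynomial ℝ)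
    (hT : T = laguerreS (α + 1) n - Polynomial.C σ * laguerreS (α + 1) (n - 1))
    (horth : ∀ q : Polynomial ℝ, q.degree < n → c1fun α ξ M (q * T) = 0)
    (hne : c1fun α ξ M (laguerreS (α + 1) (n - 1)) ≠ 0) :
    σ = c1fun α ξ M (laguerreS (α + 1) n) / c1fun α ξ M (laguerreS (α + 1) (n - 1)) ∧
    c1fun α ξ M (T ^ 2) =
      -(((n - 1).factorial : ℝ) * Real.Gamma ((n : ℝ) + α + 1) *
        c1fun α ξ M (laguerreS (α + 1) n) / c1fun α ξ M (laguerreS (α + 1) (n - 1))) := by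
  obtain ⟨k, rfl⟩ := Nat.exists_eq_add_of_le' hn
  simp only [Nat.add_sub_cancel] at hT hne ⊢
  let c : ℝ[X] →ₗ[ℝ] ℝ := (isLinearMap_c1fun hα hξ M).mk'
  change σ = c _ / c _ ∧ c _ = -(_ * _ * c _ / c _)
  have hσ : σ = c (laguerreS (α + 1) (k + 1)) / c (laguerreS (α + 1) k) := by
    have hT₁ : c T = 0 := by
      rw [← one_mul T]; exact horth 1 (by rw [degree_one]; exact_mod_cast k.succ_pos)
    rw [hT, map_sub, ← smul_eq_C_mul, map_smul, smul_eq_mul, sub_eq_zero] at hT₁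
    exact (eq_div_iff hne).mpr hT₁.symm
  refine ⟨hσ, ?_⟩
  rw [map_sq_of_orthogonal_laguerreS_sub (by linarith) c (c1fun_X_sub_C_mul hα hξ M) hT horth,
    hσ, Nat.cast_succ]
  ring_nf

theorem stmt12 (α ξ M : ℝ) (hα : -1 < α) (hξ : ξ ≤ 0) (hM : 0 ≤ M)
    (n : ℕ) (hn : 1 ≤ n) (σ : ℝ) (T : Polynomial ℝ)
    (hT : T = laguerreS (α + 1) n - Polynomial.C σ * laguerreS (α + 1) (n - 1))
    (horth : ∀ q : Polynomial ℝ, q.degree < n → c1fun α ξ M (q * T) = 0)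
    (hne : c1fun α ξ M (laguerreS (α + 1) (n - 1)) ≠ 0) :
    σ = c1fun α ξ M (laguerreS (α + 1) n) / c1fun α ξ M (laguerreS (α + 1) (n - 1)) ∧
    c1fun α ξ M (T ^ 2) =
      -(((n - 1).factorial : ℝ) * Real.Gamma ((n : ℝ) + α + 1) *
        c1fun α ξ M (laguerreS (α + 1) n) / c1fun α ξ M (laguerreS (α + 1) (n - 1))) :=
  stmt12_general α ξ M hα hξ n hn σ T hT horth hne
end
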